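/- Let O and Ô be direction-consistent orientations and write Δ = Δ_{O,Ô}. Let σ : ℂ → ℂ be odd (σ(−x) = −σ(x) for all x), applied entrywise to matrices; let h₁ : ℂ^{V×d_e} → ℂ^{V×k₁} and h₂ : ℂ^{V×d_i} → ℂ^{V×k₂} be arbitrary functions, and W₁ ∈ ℂ^{k₁×d'}, W₂ ∈ ℂ^{k₂×d'}, W₃ ∈ ℂ^{d_e×d'}. For X ∈ ℂ^{E×d_e} and Y ∈ ℂ^{E×d_i} define Z(X, Y, O) = σ( (B_equ(O))ᴴ · h₁(B_equ(O) · X) · W₁ + (B_equ(O))ᴴ · h₂(B_inv · Y) · W₂ + X · W₃ ). Then Z(Δ · X, Y, Ô) = Δ · Z(X, Y, O); that is, the equivariant EIGN convolution layer is jointly orientation-equivariant. -/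

import Mathlib

open Matrix

/-- `O` assigns to each edge either its endpoint pair `(s e, t e)` or the reversed pair. -/
def IsOrientation {V E : Type*} (s t : E → V) (O : E → V × V) : Prop :=
  ∀ e, O e = (s e, t e) ∨ O e = (t e, s e)

/-- A direction-consistent orientation: an orientation which agrees with the direction
`(s e, t e)` on every directed edge. -/
def DirConsistent {V E : Type*} (s t : E → V) (dir : E → Bool) (O : E → V × V) : Prop :=
  IsOrientation s t O ∧ ∀ e, dir e = true → O e = (s e, t e)

/-- The magnetic equivariant boundary operator. -/
noncomputable def Bequ {V E : Type*} [DecidableEq V] (q : ℝ) (s t : E → V) (dir : E → Bool)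
    (O : E → V × V) : Matrix V E ℂ :=
  Matrix.of fun v e =>
    if dir e then
      if v = s e then -Complex.exp (Complex.I * (Real.pi * q : ℂ))
      else if v = t e then Complex.exp (-(Complex.I * (Real.pi * q : ℂ)))
      else 0
    else
      if v = (O e).1 then -1
      else if v = (O e).2 then 1
      else 0

/-- The magnetic invariant boundary operator. -/
noncomputable def Binv {V E : Type*} [DecidableEq V] (q : ℝ) (s t : E → V) (dir : E → Bool) :
    Matrix V E ℂ :=
  Matrix.of fun v e =>
    if dir e then
      if v = s e then Complex.exp (Complex.I * (Real.pi * q : ℂ))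
      else if v = t e then Complex.exp (-(Complex.I * (Real.pi * q : ℂ)))
      else 0
    else
      if v = s e ∨ v = t e then 1 else 0

/-- The orientation-change matrix `Δ_{O,Ô}`. -/
noncomputable def Delta {V E : Type*} [DecidableEq V] [DecidableEq E] (O Ohat : E → V × V) :
    Matrix E E ℂ :=
  Matrix.diagonal fun e => if O e = Ohat e then 1 else -1
/-! Flipping the orientation of an undirected edge negates the corresponding column of `B_equ`,
so `B_equ(Ô) = B_equ(O) Δ` with `Δ` a Hermitian involution. Hence
`B_equ(Ô) (Δ X) = B_equ(O) X`, the two convolution terms acquire a left factor `Δ` through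
`B_equ(Ô)ᴴ = Δ B_equ(O)ᴴ`, and `Δ` commutes with the entrywise odd `σ` because its diagonal
entries are `±1`. -/

theorem Matrix.map_diagonal_mul {m n R : Type*} [DecidableEq m] [Fintype m] [Semiring R]
    (d : m → R) (M : Matrix m n R) (f : R → R) (hf : ∀ i x, f (d i * x) = d i * f x) :
    (diagonal d * M).map f = diagonal d * M.map f := by
  ext i j
  simp only [map_apply, diagonal_mul, hf]

namespace IsOrientation

variable {V E : Type*} {s t : E → V} {O Ohat : E → V × V}

theorem eq_swap_of_ne (hO : IsOrientation s t O) (hOhat : IsOrientation s t Ohat) {e : E}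
    (he : O e ≠ Ohat e) : Ohat e = (O e).swap := by
  rcases hO e with h | h <;> rcases hOhat e with h' | h' <;> simp_all

end IsOrientation

section OrientationChange

variable {V E : Type*} [DecidableEq V] [DecidableEq E] {O Ohat : E → V × V}

theorem Delta_mul_self [Fintype E] : Delta O Ohat * Delta O Ohat = 1 := by
  rw [Delta, diagonal_mul_diagonal, ← diagonal_one]
  congr 1
  funext e
  split_ifs <;> norm_num

theorem conjTranspose_Delta : (Delta O Ohat)ᴴ = Delta O Ohat := by
  rw [Delta, diagonal_conjTranspose]
  congr 1
  funext e
  by_cases he : O e = Ohat e <;> simp [he]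

theorem map_Delta_mul [Fintype E] {n : Type*} {σ : ℂ → ℂ} (hσ : ∀ x, σ (-x) = -σ x)
    (M : Matrix E n ℂ) : (Delta O Ohat * M).map σ = Delta O Ohat * M.map σ := by
  refine map_diagonal_mul _ M σ fun e x => ?_
  split_ifs <;> simp [hσ]

theorem Bequ_mul_Delta [Fintype E] {q : ℝ} {s t : E → V} {dir : E → Bool}
    (hO : DirConsistent s t dir O) (hOhat : DirConsistent s t dir Ohat) :
    Bequ q s t dir O * Delta O Ohat = Bequ q s t dir Ohat := by
  ext v e
  rw [Delta, mul_diagonal]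
  by_cases he : O e = Ohat e
  · simp [Bequ, he]
  have hdir : dir e = false := by
    by_contra hd
    exact he ((hO.2 e (by simpa using hd)).trans (hOhat.2 e (by simpa using hd)).symm)
  have hswap := hO.1.eq_swap_of_ne hOhat.1 he
  have hne : (O e).1 ≠ (O e).2 := fun h => he (by rw [hswap]; exact Prod.ext h h.symm)
  rw [if_neg he]
  simp only [Bequ, of_apply, hdir, hswap, Prod.fst_swap, Prod.snd_swap]
  by_cases h₁ : v = (O e).1 <;> by_cases h₂ : v = (O e).2 <;> simp_all [hne.symm]

end OrientationChange

theorem eign_equivariant_convolution_layer_general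
    {V E de di k₁ k₂ d' : Type*} [Fintype V] [Fintype E] [DecidableEq V] [DecidableEq E]
    [Fintype de] [Fintype di] [Fintype k₁] [Fintype k₂]
    (q : ℝ) (s t : E → V) (dir : E → Bool)
    (O Ohat : E → V × V)
    (hO : DirConsistent s t dir O) (hOhat : DirConsistent s t dir Ohat)
    (σ : ℂ → ℂ) (hσ : ∀ x, σ (-x) = -σ x)
    (h₁ : Matrix V de ℂ → Matrix V k₁ ℂ) (h₂ : Matrix V di ℂ → Matrix V k₂ ℂ)
    (W₁ : Matrix k₁ d' ℂ) (W₂ : Matrix k₂ d' ℂ) (W₃ : Matrix de d' ℂ)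
    (X : Matrix E de ℂ) (Y : Matrix E di ℂ) :
    ((Bequ q s t dir Ohat)ᴴ * h₁ (Bequ q s t dir Ohat * (Delta O Ohat * X)) * W₁
      + (Bequ q s t dir Ohat)ᴴ * h₂ (Binv q s t dir * Y) * W₂
      + (Delta O Ohat * X) * W₃).map σ
    = Delta O Ohat *
      (((Bequ q s t dir O)ᴴ * h₁ (Bequ q s t dir O * X) * W₁
        + (Bequ q s t dir O)ᴴ * h₂ (Binv q s t dir * Y) * W₂
        + X * W₃).map σ) := by
  have hB := Bequ_mul_Delta (q := q) hO hOhat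
  have hBX : Bequ q s t dir Ohat * (Delta O Ohat * X) = Bequ q s t dir O * X := by
    rw [← hB, Matrix.mul_assoc, ← Matrix.mul_assoc (Delta O Ohat), Delta_mul_self,
      Matrix.one_mul]
  have hBH : (Bequ q s t dir Ohat)ᴴ = Delta O Ohat * (Bequ q s t dir O)ᴴ := by
    rw [← hB, conjTranspose_mul, conjTranspose_Delta]
  rw [hBX, hBH, ← map_Delta_mul hσ]
  simp only [Matrix.mul_assoc, Matrix.mul_add]

/-- The equivariant EIGN convolution layer
`Z(X, Y, O) = σ((B_equ(O))ᴴ h₁(B_equ(O) X) W₁ + (B_equ(O))ᴴ h₂(B_inv Y) W₂ + X W₃)`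
is jointly orientation-equivariant: `Z(Δ·X, Y, Ô) = Δ · Z(X, Y, O)`. -/
theorem eign_equivariant_convolution_layer
    {V E de di k₁ k₂ d' : Type*} [Fintype V] [Fintype E] [DecidableEq V] [DecidableEq E]
    [Fintype de] [Fintype di] [Fintype k₁] [Fintype k₂]
    (q : ℝ) (s t : E → V) (hst : ∀ e, s e ≠ t e) (dir : E → Bool)
    (O Ohat : E → V × V)
    (hO : DirConsistent s t dir O) (hOhat : DirConsistent s t dir Ohat)
    (σ : ℂ → ℂ) (hσ : ∀ x, σ (-x) = -σ x)
    (h₁ : Matrix V de ℂ → Matrix V k₁ ℂ) (h₂ : Matrix V di ℂ → Matrix V k₂ ℂ)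
    (W₁ : Matrix k₁ d' ℂ) (W₂ : Matrix k₂ d' ℂ) (W₃ : Matrix de d' ℂ)
    (X : Matrix E de ℂ) (Y : Matrix E di ℂ) :
    ((Bequ q s t dir Ohat)ᴴ * h₁ (Bequ q s t dir Ohat * (Delta O Ohat * X)) * W₁
      + (Bequ q s t dir Ohat)ᴴ * h₂ (Binv q s t dir * Y) * W₂
      + (Delta O Ohat * X) * W₃).map σ
    = Delta O Ohat *
      (((Bequ q s t dir O)ᴴ * h₁ (Bequ q s t dir O * X) * W₁
        + (Bequ q s t dir O)ᴴ * h₂ (Binv q s t dir * Y) * W₂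
        + X * W₃).map σ) :=
  eign_equivariant_convolution_layer_general q s t dir O Ohat hO hOhat σ hσ h₁ h₂ W₁ W₂ W₃ X Y
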